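/- arXiv:1802.03598 — 2 statements merged into one kernel-verified Lean document; each statement's English description precedes it below -/
import Mathlib

section
/- For every positive integer n, the semigroup IPF(ℕ^n) of order isomorphisms between principal filters of (ℕ^n, product order) is isomorphic to the semidirect product S_n ⋉_Φ Cⁿ(p,q), where S_n acts on the n-th direct power of the bicyclic monoid by permuting coordinates. -/
/-- An element of IPF(ℕ^n): a partial bijection of ℕ^n whose source and target are
principal filters and which is an order isomorphism between them. -/
def IsIPF {n : ℕ} (e : PartialEquiv (Fin n → ℕ+) (Fin n → ℕ+)) : Prop :=
  (∃ x, e.source = Set.Ici x) ∧ (∃ y, e.target = Set.Ici y) ∧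
    ∀ a ∈ e.source, ∀ b ∈ e.source, a ≤ b ↔ e a ≤ e b

/-- The bicyclic monoid C(p,q) modelled on ℕ₀ × ℕ₀ with
(i,j)*(k,l) = (i + max{j,k} − j, l + max{j,k} − k). -/
def Bic : Type := ℕ × ℕ

def Bic.mul (a b : ℕ × ℕ) : ℕ × ℕ :=
  (a.1 + max a.2 b.1 - a.2, b.2 + max a.2 b.1 - b.1)

instance : Mul Bic := ⟨Bic.mul⟩

/-- The semidirect product S_n ⋉_Φ Cⁿ(p,q), where S_n acts on the n-th power of the
bicyclic monoid by permuting coordinates: Φ_σ(c) = c ∘ σ⁻¹.  Multiplication is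
(σ,c)(τ,d) = (στ, (c)Φ_τ * d); "στ" means "apply σ then τ", which in Mathlib's
convention for `Equiv.Perm` is `τ * σ`. -/
structure SDP (n : ℕ) where
  perm : Equiv.Perm (Fin n)
  elt : Fin n → Bic

instance (n : ℕ) : Mul (SDP n) :=
  ⟨fun a b => ⟨b.perm * a.perm, fun i => (a.elt (b.perm.symm i) : Bic) * b.elt i⟩⟩

/-!
Conjugating an order isomorphism between principal filters `Ici x` and `Ici y` of `ℕ+ⁿ` by the
translations `ℕⁿ ≃o Ici x` and `ℕⁿ ≃o Ici y` gives an order automorphism of `ℕⁿ`. Such an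
automorphism permutes the atoms (the unit vectors) by some `σ`; it maps each axis to an axis
strictly monotonically, and so does its inverse, so it fixes the multiples of unit vectors up to
`σ`, and is therefore the coordinate permutation by `σ`. Hence every element of IPF(ℕⁿ) is the
map `a ↦ y + σ · (a - x)` on `Ici x`, and it is encoded by `(σ, c)` with
`c i = (x (σ⁻¹ i) - 1, y i - 1)`. The composite of two such maps lives on the filter that the
first one maps onto `Ici (y ⊔ x')`, and in coordinates this is exactly the bicyclic product.
-/

open Equiv Set

namespace Pi

variable {ι : Type*} [DecidableEq ι]

lemma single_le_iff_le_apply {b : ι → ℕ} {j : ι} {m : ℕ} : Pi.single j m ≤ b ↔ m ≤ b j := by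
  refine ⟨fun h => by simpa using h j, fun h k => ?_⟩
  rcases eq_or_ne k j with rfl | hk
  · simpa using h
  · simp [hk]

lemma isAtom_iff_eq_single_one {b : ι → ℕ} : IsAtom b ↔ ∃ i, b = Pi.single i 1 := by
  have hℕ (k : ℕ) : IsAtom k ↔ k = 1 := by
    simp [← bot_covBy_iff, Nat.covBy_iff_add_one_eq, eq_comm]
  simp only [Pi.isAtom_iff, hℕ, funext_iff]
  refine exists_congr fun i => ⟨fun ⟨h1, h0⟩ k => ?_, fun h => ⟨by simpa using h i, fun k hk => ?_⟩⟩
  · rcases eq_or_ne k i with rfl | hk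
    · simpa using h1
    · simpa [hk] using h0 k hk
  · simpa [hk] using h k

end Pi

namespace OrderIso

variable {ι : Type*}

section

variable [DecidableEq ι]

lemma exists_perm_apply_single_one (G : (ι → ℕ) ≃o (ι → ℕ)) :
    ∃ σ : Perm ι, ∀ i, G (Pi.single i 1) = Pi.single (σ i) 1 := by
  let atoms : ι ≃ {b : ι → ℕ // IsAtom b} :=
    Equiv.ofBijective (fun i => ⟨Pi.single i 1, Pi.isAtom_iff_eq_single_one.2 ⟨i, rfl⟩⟩)
      ⟨fun i j h => by_contra fun hij => by simpa [hij] using congrFun (congrArg Subtype.val h) i,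
        fun b => (Pi.isAtom_iff_eq_single_one.1 b.2).imp fun i h => Subtype.ext h.symm⟩
  let Gatoms := G.toEquiv.subtypeEquiv fun b => (G.isAtom_iff b).symm
  refine ⟨atoms.trans (Gatoms.trans atoms.symm), fun i => ?_⟩
  exact congrArg Subtype.val (atoms.apply_symm_apply (Gatoms (atoms i))).symm

variable {G : (ι → ℕ) ≃o (ι → ℕ)} {σ : Perm ι}

lemma apply_single_eq_single_apply (hσ : ∀ i, G (Pi.single i 1) = Pi.single (σ i) 1)
    (j : ι) (m : ℕ) : G (Pi.single j m) = Pi.single (σ j) (G (Pi.single j m) (σ j)) := by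
  funext k
  obtain ⟨l, rfl⟩ := σ.surjective k
  rcases eq_or_ne l j with rfl | hl
  · simp
  · have : ¬ (Pi.single l 1 : ι → ℕ) ≤ Pi.single j m := by simp [Pi.single_le_iff_le_apply, hl]
    rw [← G.le_iff_le, hσ, Pi.single_le_iff_le_apply] at this
    simp [σ.injective.ne hl]
    omega

lemma le_apply_single_apply (hσ : ∀ i, G (Pi.single i 1) = Pi.single (σ i) 1)
    (j : ι) (m : ℕ) : m ≤ G (Pi.single j m) (σ j) := by
  refine StrictMono.le_apply (f := fun m => G (Pi.single j m) (σ j)) fun k l hkl => ?_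
  have := G.strictMono (Pi.single_strictMono j hkl)
  rwa [apply_single_eq_single_apply hσ, apply_single_eq_single_apply hσ j l,
    (Pi.single_strictMono (σ j)).lt_iff_lt] at this

lemma apply_single (hσ : ∀ i, G (Pi.single i 1) = Pi.single (σ i) 1) (j : ι) (m : ℕ) :
    G (Pi.single j m) = Pi.single (σ j) m := by
  have hσ_symm (i : ι) : G.symm (Pi.single i 1) = Pi.single (σ.symm i) 1 := by
    rw [G.symm_apply_eq, hσ, σ.apply_symm_apply]
  have hG := apply_single_eq_single_apply hσ j m
  have hback : G.symm (Pi.single (σ j) (G (Pi.single j m) (σ j))) (σ.symm (σ j)) = m := by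
    simp [← hG]
  have hle := le_apply_single_apply hσ_symm (σ j) (G (Pi.single j m) (σ j))
  rw [hback] at hle
  rw [hG, le_antisymm hle (le_apply_single_apply hσ j m)]

end

theorem exists_perm_apply_eq (G : (ι → ℕ) ≃o (ι → ℕ)) :
    ∃ σ : Perm ι, ∀ b i, G b i = b (σ.symm i) := by
  classical
  obtain ⟨σ, hσ⟩ := exists_perm_apply_single_one G
  refine ⟨σ, fun b i => eq_of_forall_le_iff fun m => ?_⟩
  rw [← Pi.single_le_iff_le_apply, ← Pi.single_le_iff_le_apply, ← σ.apply_symm_apply i,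
    ← apply_single hσ, G.le_iff_le, σ.apply_symm_apply]

end OrderIso

variable {ι : Type*}

@[simp] lemma Nat.coe_toPNat (k : ℕ) (h : 0 < k) : (k.toPNat h : ℕ) = k := rfl

@[simp] lemma PNat.coe_max (a b : ℕ+) : ((max a b : ℕ+) : ℕ) = max (a : ℕ) b := rfl

lemma mem_Ici_iff_forall_coe_le {x a : ι → ℕ+} : a ∈ Ici x ↔ ∀ i, (x i : ℕ) ≤ a i := by
  simp [Pi.le_def]

def translateIci (x : ι → ℕ+) : (ι → ℕ) ≃o Ici x where
  toFun b := ⟨fun i => (x i + b i).toPNat (by positivity), fun i => by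
    rw [← PNat.coe_le_coe, Nat.coe_toPNat]; omega⟩
  invFun a i := a.1 i - x i
  left_inv b := by funext i; simp
  right_inv a := by
    ext i
    refine PNat.eq ?_
    have := mem_Ici_iff_forall_coe_le.1 a.2 i
    simp only [Nat.coe_toPNat]
    omega
  map_rel_iff' {b c} := by
    simp [Pi.le_def, ← Subtype.coe_le_coe, ← PNat.coe_le_coe]

lemma translateIci_symm_apply (x : ι → ℕ+) (a : Ici x) (i : ι) :
    (translateIci x).symm a i = a.1 i - x i := rfl

def affinePEquiv (σ : Perm ι) (x y : ι → ℕ+) : PartialEquiv (ι → ℕ+) (ι → ℕ+) where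
  toFun a i := (y i + (a (σ.symm i) - x (σ.symm i) : ℕ)).toPNat (by positivity)
  invFun b m := (x m + (b (σ m) - y (σ m) : ℕ)).toPNat (by positivity)
  source := Ici x
  target := Ici y
  map_source' a _ i := by rw [← PNat.coe_le_coe, Nat.coe_toPNat]; omega
  map_target' b _ m := by rw [← PNat.coe_le_coe, Nat.coe_toPNat]; omega
  left_inv' a ha := funext fun m => PNat.eq <| by
    have := mem_Ici_iff_forall_coe_le.1 ha m
    simp only [Nat.coe_toPNat, σ.symm_apply_apply]
    omega
  right_inv' b hb := funext fun i => PNat.eq <| by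
    have := mem_Ici_iff_forall_coe_le.1 hb i
    simp only [Nat.coe_toPNat, σ.apply_symm_apply]
    omega

variable {σ τ : Perm ι} {x y x' y' : ι → ℕ+}

@[simp]
lemma affinePEquiv_apply_coe (a : ι → ℕ+) (i : ι) :
    (affinePEquiv σ x y a i : ℕ) = y i + (a (σ.symm i) - x (σ.symm i)) := rfl

@[simp]
lemma affinePEquiv_symm_apply_coe (b : ι → ℕ+) (m : ι) :
    ((affinePEquiv σ x y).symm b m : ℕ) = x m + (b (σ m) - y (σ m)) := rfl

@[simp] lemma affinePEquiv_source : (affinePEquiv σ x y).source = Ici x := rfl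
@[simp] lemma affinePEquiv_target : (affinePEquiv σ x y).target = Ici y := rfl

lemma isIPF_affinePEquiv {n : ℕ} (σ : Perm (Fin n)) (x y : Fin n → ℕ+) :
    IsIPF (affinePEquiv σ x y) := by
  refine ⟨⟨x, rfl⟩, ⟨y, rfl⟩, fun a ha b hb => ?_⟩
  rw [affinePEquiv_source, mem_Ici_iff_forall_coe_le] at ha hb
  simp only [Pi.le_def, ← PNat.coe_le_coe, affinePEquiv_apply_coe]
  refine ⟨fun h i => by have := h (σ.symm i); omega, fun h m => ?_⟩
  have := h (σ m)
  simp only [σ.symm_apply_apply] at this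
  have := ha m; have := hb m
  omega

lemma eq_of_affinePEquiv_equiv (h : affinePEquiv σ x y ≈ affinePEquiv τ x' y') :
    σ = τ ∧ x = x' ∧ y = y' := by
  classical
  obtain rfl : x = x' := Set.Ici_injective h.source_eq
  obtain rfl : y = y' := Set.Ici_injective h.target_eq
  refine ⟨Equiv.ext fun m => ?_, rfl, rfl⟩
  let a := Function.update x m (x m + 1)
  have ha : a ∈ Ici x := fun k => by
    rcases eq_or_ne k m with rfl | hk <;> simp [a, *, ← PNat.coe_le_coe]
  have := congrArg (fun b : ι → ℕ+ => (b (σ m) : ℕ)) (h.eqOn ha)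
  by_contra hne
  have hm : τ.symm (σ m) ≠ m := fun h' => hne (τ.symm_apply_eq.1 h')
  simp [a, hm] at this

lemma affinePEquiv_trans :
    (affinePEquiv σ x y).trans (affinePEquiv τ x' y') ≈
      affinePEquiv (τ * σ) ((affinePEquiv σ x y).symm (y ⊔ x'))
        (affinePEquiv τ x' y' (y ⊔ x')) := by
  have hsource : ((affinePEquiv σ x y).trans (affinePEquiv τ x' y')).source =
      Ici ((affinePEquiv σ x y).symm (y ⊔ x')) := by
    ext a
    simp only [PartialEquiv.trans_source, affinePEquiv_source, mem_inter_iff, mem_preimage,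
      mem_Ici_iff_forall_coe_le, affinePEquiv_apply_coe, affinePEquiv_symm_apply_coe, Pi.sup_apply,
      PNat.coe_max]
    refine ⟨fun ⟨h, h'⟩ m => ?_, fun h => ⟨fun m => ?_, fun i => ?_⟩⟩
    · have := h m; have := h' (σ m)
      simp only [σ.symm_apply_apply] at this
      omega
    · have := h m; omega
    · have := h (σ.symm i)
      simp only [σ.apply_symm_apply] at this
      omega
  refine ⟨hsource, fun a ha => ?_⟩
  rw [hsource, mem_Ici_iff_forall_coe_le] at ha
  funext i
  have := ha (σ.symm (τ.symm i))
  simp only [affinePEquiv_symm_apply_coe, Pi.sup_apply, PNat.coe_max, σ.apply_symm_apply] at this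
  refine PNat.eq ?_
  simp only [PartialEquiv.coe_trans, Function.comp_apply, affinePEquiv_apply_coe,
    affinePEquiv_symm_apply_coe, Pi.sup_apply, PNat.coe_max, Perm.mul_def, Equiv.symm_trans_apply,
    σ.apply_symm_apply]
  omega

lemma IsIPF.exists_affinePEquiv_equiv {n : ℕ} {e : PartialEquiv (Fin n → ℕ+) (Fin n → ℕ+)}
    (he : IsIPF e) : ∃ σ x y, e ≈ affinePEquiv σ x y := by
  obtain ⟨⟨x, hx⟩, ⟨y, hy⟩, hmono⟩ := he
  have hbij : BijOn e (Ici x) (Ici y) := hx ▸ hy ▸ e.bijOn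
  let E : Ici x ≃o Ici y :=
    ⟨hbij.equiv e, fun {a b} => (hmono a (hx.ge a.2) b (hx.ge b.2)).symm⟩
  have hE (a : Ici x) : (E a : Fin n → ℕ+) = e a := rfl
  obtain ⟨σ, hσ⟩ := ((translateIci x).trans (E.trans (translateIci y).symm)).exists_perm_apply_eq
  refine ⟨σ, x, y, hx, fun a ha => funext fun i => PNat.eq ?_⟩
  have hσi := hσ ((translateIci x).symm ⟨a, hx.le ha⟩) i
  have hy_le := mem_Ici_iff_forall_coe_le.1 (hy.le (e.map_source ha)) i
  simp only [OrderIso.trans_apply, OrderIso.apply_symm_apply, translateIci_symm_apply, hE] at hσi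
  rw [affinePEquiv_apply_coe]
  omega

attribute [ext] SDP

lemma Bic.fst_mul (a b : Bic) :
    Prod.fst (a * b) = Prod.fst a + max (Prod.snd a) (Prod.fst b) - Prod.snd a := rfl

lemma Bic.snd_mul (a b : Bic) :
    Prod.snd (a * b) = Prod.snd b + max (Prod.snd a) (Prod.fst b) - Prod.fst b := rfl

namespace SDP

variable {n : ℕ}

def domMin (s : SDP n) (m : Fin n) : ℕ+ := (Prod.fst (s.elt (s.perm m))).succPNat

def codMin (s : SDP n) (i : Fin n) : ℕ+ := (Prod.snd (s.elt i)).succPNat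

@[simp] lemma mul_perm (s t : SDP n) : (s * t).perm = t.perm * s.perm := rfl

@[simp] lemma mul_elt (s t : SDP n) (i : Fin n) :
    (s * t).elt i = s.elt (t.perm.symm i) * t.elt i := rfl

def toPartialEquiv (s : SDP n) : PartialEquiv (Fin n → ℕ+) (Fin n → ℕ+) :=
  affinePEquiv s.perm s.domMin s.codMin

lemma isIPF_toPartialEquiv (s : SDP n) : IsIPF s.toPartialEquiv :=
  isIPF_affinePEquiv _ _ _

lemma eq_of_toPartialEquiv_equiv {s t : SDP n} (h : s.toPartialEquiv ≈ t.toPartialEquiv) :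
    s = t := by
  obtain ⟨hperm, hdom, hcod⟩ := eq_of_affinePEquiv_equiv h
  refine SDP.ext hperm (funext fun i => Prod.ext ?_ ?_)
  · simpa [domMin, hperm] using congrFun hdom (t.perm.symm i)
  · simpa [codMin] using congrFun hcod i

def ofMinima (σ : Perm (Fin n)) (x y : Fin n → ℕ+) : SDP n :=
  ⟨σ, fun i => ((x (σ.symm i)).natPred, (y i).natPred)⟩

lemma toPartialEquiv_ofMinima (σ : Perm (Fin n)) (x y : Fin n → ℕ+) :
    (ofMinima σ x y).toPartialEquiv = affinePEquiv σ x y := by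
  have hdom : (ofMinima σ x y).domMin = x := funext fun m => by
    change ((x (σ.symm (σ m))).natPred).succPNat = x m
    simp
  have hcod : (ofMinima σ x y).codMin = y := funext fun i => PNat.succPNat_natPred (y i)
  rw [toPartialEquiv, hdom, hcod]
  rfl

lemma exists_toPartialEquiv_equiv {e : PartialEquiv (Fin n → ℕ+) (Fin n → ℕ+)} (he : IsIPF e) :
    ∃ s : SDP n, s.toPartialEquiv ≈ e := by
  obtain ⟨σ, x, y, h⟩ := he.exists_affinePEquiv_equiv
  exact ⟨ofMinima σ x y, toPartialEquiv_ofMinima σ x y ▸ Setoid.symm h⟩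

lemma domMin_mul (s t : SDP n) :
    (s * t).domMin = s.toPartialEquiv.symm (s.codMin ⊔ t.domMin) := by
  funext m
  refine PNat.eq ?_
  simp [toPartialEquiv, domMin, codMin, Bic.fst_mul]
  omega

lemma codMin_mul (s t : SDP n) :
    (s * t).codMin = t.toPartialEquiv (s.codMin ⊔ t.domMin) := by
  funext i
  refine PNat.eq ?_
  simp [toPartialEquiv, domMin, codMin, Bic.snd_mul]
  omega

lemma toPartialEquiv_mul (s t : SDP n) :
    (s * t).toPartialEquiv ≈ s.toPartialEquiv.trans t.toPartialEquiv := by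
  rw [toPartialEquiv, domMin_mul, codMin_mul]
  exact Setoid.symm affinePEquiv_trans

end SDP

theorem stmt16_general (n : ℕ) :
    ∃ Ψ : {e : PartialEquiv (Fin n → ℕ+) (Fin n → ℕ+) // IsIPF e} → SDP n,
      Function.Surjective Ψ ∧
      (∀ a b, Ψ a = Ψ b ↔ a.1 ≈ b.1) ∧
      (∀ a b c, c.1 ≈ a.1.trans b.1 → Ψ c = Ψ a * Ψ b) := by
  choose Ψ hΨ using fun e : {e : PartialEquiv (Fin n → ℕ+) (Fin n → ℕ+) // IsIPF e} =>
    SDP.exists_toPartialEquiv_equiv e.2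
  refine ⟨Ψ, fun s => ⟨⟨s.toPartialEquiv, s.isIPF_toPartialEquiv⟩, ?_⟩,
    fun a b => ⟨fun h => ?_, fun h => ?_⟩, fun a b c h => ?_⟩
  · exact SDP.eq_of_toPartialEquiv_equiv (hΨ _)
  · exact Setoid.trans (Setoid.symm (hΨ a)) (h ▸ hΨ b)
  · exact SDP.eq_of_toPartialEquiv_equiv
      (Setoid.trans (hΨ a) (Setoid.trans h (Setoid.symm (hΨ b))))
  · apply SDP.eq_of_toPartialEquiv_equiv
    calc (Ψ c).toPartialEquiv ≈ c.1 := hΨ c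
      _ ≈ a.1.trans b.1 := h
      _ ≈ (Ψ a).toPartialEquiv.trans (Ψ b).toPartialEquiv :=
        (Setoid.symm (hΨ a)).trans' (Setoid.symm (hΨ b))
      _ ≈ (Ψ a * Ψ b).toPartialEquiv := Setoid.symm (SDP.toPartialEquiv_mul _ _)

/-- IPF(ℕ^n) is isomorphic to the semidirect product S_n ⋉_Φ Cⁿ(p,q):
there is a map Ψ from IPF(ℕ^n) onto the semidirect product which identifies exactly
the partial maps that are equal as partial maps (`≈`, EqOnSource) and transforms
composition of partial maps into the semidirect-product multiplication. -/
theorem stmt16 (n : ℕ) (hn : 0 < n) :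
    ∃ Ψ : {e : PartialEquiv (Fin n → ℕ+) (Fin n → ℕ+) // IsIPF e} → SDP n,
      Function.Surjective Ψ ∧
      (∀ a b, Ψ a = Ψ b ↔ a.1 ≈ b.1) ∧
      (∀ a b c, c.1 ≈ a.1.trans b.1 → Ψ c = Ψ a * Ψ b) :=
  stmt16_general n
end

section
/- For every α, β ∈ IPF(ℕ^n), the sets {χ ∈ IPF(ℕ^n) : αχ = β} and {χ ∈ IPF(ℕ^n) : χα = β} are finite; i.e., all left and right translations in IPF(ℕ^n) are finite-to-one maps. -/
/-!
An order automorphism of `ℕ^ι` permutes the coordinates: it maps points whose principal ideal is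
a chain (the points on the axes) to such points, and it preserves the sizes of principal ideals.
Transporting along translations, every element of IPF(ℕ^n) with domain `↑z` and image `↑t` is
`a ↦ t + σ(a - z)` for a permutation `σ`, so it is determined by its domain and its restriction to
any smaller principal filter `↑w`. If `αχ = β` (resp. `χα = β`), then `χ` agrees with `βα⁻¹`
(resp. `α⁻¹β`) on a filter `↑w` determined by `α` and `β` and contained in the domain of `χ`; hence `χ`
is determined by the least element of its domain, which lies in the finite ideal `↓w`.
-/

open Set

section Automorphisms

variable {ι : Type*} [DecidableEq ι]

theorem Pi.single_le_iff {i : ι} {m : ℕ} {v : ι → ℕ} : Pi.single i m ≤ v ↔ m ≤ v i := by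
  refine ⟨fun h => by simpa using h i, fun h j => ?_⟩
  rcases eq_or_ne j i with rfl | hj
  · simpa using h
  · simp [Pi.single_eq_of_ne hj]

theorem isChain_Iic_single (i : ι) (m : ℕ) : IsChain (· ≤ ·) (Iic (Pi.single i m : ι → ℕ)) := by
  intro a ha b hb _
  have zero_off : ∀ c ∈ Iic (Pi.single i m : ι → ℕ), ∀ j ≠ i, c j = 0 := fun c hc j hj => by
    simpa [Pi.single_eq_of_ne hj] using hc j
  rcases le_total (a i) (b i) with h | h
  · left; intro j
    rcases eq_or_ne j i with rfl | hj
    · exact h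
    · simp [zero_off a ha j hj]
  · right; intro j
    rcases eq_or_ne j i with rfl | hj
    · exact h
    · simp [zero_off b hb j hj]

theorem eq_single_of_isChain_Iic {v : ι → ℕ} (hv : IsChain (· ≤ ·) (Iic v)) {i : ι}
    (hi : v i ≠ 0) : v = Pi.single i (v i) := by
  funext j
  rcases eq_or_ne j i with rfl | hj
  · simp
  rw [Pi.single_eq_of_ne hj]
  rcases hv.total (Pi.single_le_iff.2 le_rfl : Pi.single i (v i) ≤ v)
      (Pi.single_le_iff.2 le_rfl : Pi.single j (v j) ≤ v) with h | h
  · exact absurd (by simpa [Pi.single_eq_of_ne hj.symm] using h i) hi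
  · simpa [Pi.single_eq_of_ne hj] using h j

variable [Fintype ι]

theorem card_Iic_single (i : ι) (m : ℕ) : (Finset.Iic (Pi.single i m : ι → ℕ)).card = m + 1 := by
  rw [Pi.card_Iic, Finset.prod_eq_single i (fun j _ hj => by simp [Pi.single_eq_of_ne hj])
    (by simp)]
  simp

theorem OrderIso.card_Iic {α β : Type*} [Preorder α] [Preorder β] [LocallyFiniteOrderBot α]
    [LocallyFiniteOrderBot β] (e : α ≃o β) (x : α) :
    (Finset.Iic (e x)).card = (Finset.Iic x).card := by
  rw [← Set.ncard_coe_finset, ← Set.ncard_coe_finset, Finset.coe_Iic, Finset.coe_Iic,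
    ← e.image_Iic, Set.ncard_image_of_injective _ e.injective]

theorem OrderIso.exists_apply_single (e : (ι → ℕ) ≃o (ι → ℕ)) (i : ι) :
    ∃ j, ∀ m, e (Pi.single i m) = Pi.single j m := by
  have axis : ∀ m j, e (Pi.single i m) j ≠ 0 → e (Pi.single i m) = Pi.single j m := by
    intro m j hj
    have hchain : IsChain (· ≤ ·) (Iic (e (Pi.single i m))) := by
      rw [← e.image_Iic]; exact (isChain_Iic_single i m).image e
    have hform := eq_single_of_isChain_Iic hchain hj
    have hcard := e.card_Iic (Pi.single i m)
    rw [hform, card_Iic_single, card_Iic_single] at hcard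
    rw [hform, Nat.succ_injective hcard]
  have map_zero : e 0 = 0 := e.map_bot
  obtain ⟨j, hj⟩ : ∃ j, e (Pi.single i 1) j ≠ 0 := by
    by_contra! h
    have : (Pi.single i 1 : ι → ℕ) = 0 := e.injective (by rw [map_zero]; exact funext h)
    simpa using congrFun this i
  refine ⟨j, fun m => ?_⟩
  rcases m with _ | m
  · simpa using map_zero
  apply axis
  have hle := e.monotone (Pi.single_mono i (by omega : 1 ≤ m + 1))
  rw [axis 1 j hj] at hle
  have := hle j
  simp only [Pi.single_eq_same] at this
  omega

theorem OrderIso.exists_perm_apply (e : (ι → ℕ) ≃o (ι → ℕ)) :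
    ∃ σ : Equiv.Perm ι, ∀ v j, e v j = v (σ j) := by
  choose τ hτ using e.exists_apply_single
  have hinj : Function.Injective τ := fun i k h => by
    have := e.injective ((hτ i 1).trans (h ▸ (hτ k 1).symm))
    by_contra hne
    simpa [Pi.single_eq_of_ne hne] using congrFun this i
  let τ' := Equiv.ofBijective τ (Finite.injective_iff_bijective.mp hinj)
  refine ⟨τ'.symm, fun v j => eq_of_forall_le_iff fun m => ?_⟩
  obtain ⟨i, rfl⟩ := τ'.surjective j
  calc m ≤ e v (τ i) ↔ Pi.single (τ i) m ≤ e v := Pi.single_le_iff.symm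
    _ ↔ e (Pi.single i m) ≤ e v := by rw [hτ]
    _ ↔ Pi.single i m ≤ v := e.le_iff_le
    _ ↔ m ≤ v (τ'.symm (τ' i)) := by rw [τ'.symm_apply_apply]; exact Pi.single_le_iff

end Automorphisms

@[simps apply]
def Pi.pnatIciOrderIso {ι : Type*} (z : ι → ℕ+) : Ici z ≃o (ι → ℕ) where
  toFun a i := (a.1 i : ℕ) - z i
  invFun v := ⟨fun i => ⟨z i + v i, by positivity⟩, fun i =>
    PNat.coe_le_coe _ _ |>.1 (Nat.le_add_right _ _)⟩
  left_inv a := by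
    ext i
    rw [← PNat.coe_inj]
    have := PNat.coe_le_coe _ _ |>.2 (a.2 i)
    dsimp only
    rw [PNat.mk_coe]
    omega
  right_inv v := by
    funext i
    simp
  map_rel_iff' {a b} := by
    simp only [Equiv.coe_fn_mk, Pi.le_def]
    refine forall_congr' fun i => ?_
    have ha := PNat.coe_le_coe _ _ |>.2 (a.2 i)
    have hb := PNat.coe_le_coe _ _ |>.2 (b.2 i)
    rw [← PNat.coe_le_coe]
    omega

def PartialEquiv.toOrderIso {α β : Type*} [LE α] [LE β] (e : PartialEquiv α β)
    (he : ∀ a ∈ e.source, ∀ b ∈ e.source, a ≤ b ↔ e a ≤ e b) : e.source ≃o e.target :=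
  { e.toEquiv with map_rel_iff' := fun {a b} => (he a a.2 b b.2).symm }

theorem PartialEquiv.eqOn_of_trans_eqOnSource_left {X Y Z : Type*} {α : PartialEquiv X Y}
    {χ : PartialEquiv Y Z} {β : PartialEquiv X Z} (h : α.trans χ ≈ β) :
    β.source ⊆ α.source ∧ α '' β.source ⊆ χ.source ∧ EqOn χ (β ∘ α.symm) (α '' β.source) := by
  rw [← PartialEquiv.EqOnSource.source_eq h, PartialEquiv.trans_source]
  refine ⟨inter_subset_left, ?_, ?_⟩
  · rintro _ ⟨x, hx, rfl⟩
    exact hx.2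
  · rintro _ ⟨x, hx, rfl⟩
    have := h.2 (by rwa [PartialEquiv.trans_source] : x ∈ (α.trans χ).source)
    simp [α.left_inv hx.1, ← this]

theorem PartialEquiv.eqOn_of_trans_eqOnSource_right {X Y Z : Type*} {χ : PartialEquiv X Y}
    {α : PartialEquiv Y Z} {β : PartialEquiv X Z} (h : χ.trans α ≈ β) :
    β.source ⊆ χ.source ∧ EqOn χ (α.symm ∘ β) β.source := by
  rw [← PartialEquiv.EqOnSource.source_eq h, PartialEquiv.trans_source]
  refine ⟨inter_subset_left, fun x hx => ?_⟩
  have := h.2 (by rwa [PartialEquiv.trans_source] : x ∈ (χ.trans α).source)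
  simp [← this, α.left_inv hx.2]

/-- Comparing the values at `w` and at `w + eⱼ` shows that both affine forms read the same
coordinate with the same offset. -/
theorem eqOn_Ici_of_eqOn_Ici_of_affine {ι : Type*} [DecidableEq ι] {z w : ι → ℕ+} (hzw : z ≤ w)
    {f g : (ι → ℕ+) → ℕ} {j k : ι} {p q : ℕ}
    (hf : ∀ a, z ≤ a → f a + z j = p + a j) (hg : ∀ a, z ≤ a → g a + z k = q + a k)
    (hfg : EqOn f g (Ici w)) : EqOn f g (Ici z) := by
  set w' := Function.update w j (w j + 1)
  have hww' : w ≤ w' := le_update_iff.2 ⟨(PNat.lt_add_right _ _).le, fun _ _ => le_rfl⟩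
  have hw := hfg (self_mem_Ici : w ∈ Ici w)
  have hw' := hfg (hww' : w' ∈ Ici w)
  have hf₀ := hf w hzw
  have hg₀ := hg w hzw
  have hf₁ := hf w' (hzw.trans hww')
  have hg₁ := hg w' (hzw.trans hww')
  have hj : (w' j : ℕ) = w j + 1 := by simp [w']
  obtain rfl : j = k := by
    by_contra hjk
    have hk : w' k = w k := Function.update_of_ne (Ne.symm hjk) _ _
    rw [hk] at hg₁
    omega
  intro a ha
  have := hf a ha
  have := hg a ha
  omega

section IPF

variable {n : ℕ}

theorem IsIPF.exists_perm {χ : PartialEquiv (Fin n → ℕ+) (Fin n → ℕ+)} (h : IsIPF χ)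
    {z t : Fin n → ℕ+} (hs : χ.source = Ici z) (ht : χ.target = Ici t) :
    ∃ σ : Equiv.Perm (Fin n), ∀ a, z ≤ a → ∀ i, (χ a i : ℕ) + z (σ i) = t i + a (σ i) := by
  let F : (Fin n → ℕ) ≃o (Fin n → ℕ) :=
    (Pi.pnatIciOrderIso z).symm.trans <| (OrderIso.setCongr _ _ hs).symm.trans <|
      (χ.toOrderIso h.2.2).trans <| (OrderIso.setCongr _ _ ht).trans (Pi.pnatIciOrderIso t)
  obtain ⟨σ, hσ⟩ := F.exists_perm_apply
  refine ⟨σ, fun a ha i => ?_⟩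
  have hχa : t ≤ χ a := by
    have := χ.map_source (hs ▸ ha : a ∈ χ.source)
    rwa [ht] at this
  have hF : F (Pi.pnatIciOrderIso z ⟨a, ha⟩) = Pi.pnatIciOrderIso t ⟨χ a, hχa⟩ := by
    simp only [F, OrderIso.trans_apply, OrderIso.symm_apply_apply]
    rfl
  have := hσ (Pi.pnatIciOrderIso z ⟨a, ha⟩) i
  rw [hF] at this
  simp only [Pi.pnatIciOrderIso_apply] at this
  have := PNat.coe_le_coe _ _ |>.2 (hχa i)
  have := PNat.coe_le_coe _ _ |>.2 (ha (σ i))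
  omega

theorem IsIPF.eqOnSource_of_eqOn {χ₁ χ₂ : PartialEquiv (Fin n → ℕ+) (Fin n → ℕ+)}
    (h₁ : IsIPF χ₁) (h₂ : IsIPF χ₂) (hs : χ₁.source = χ₂.source) {w : Fin n → ℕ+}
    (hw : w ∈ χ₁.source) (heq : EqOn χ₁ χ₂ (Ici w)) : χ₁ ≈ χ₂ := by
  obtain ⟨z, hz⟩ := h₁.1
  obtain ⟨t₁, ht₁⟩ := h₁.2.1
  obtain ⟨t₂, ht₂⟩ := h₂.2.1
  obtain ⟨σ₁, hσ₁⟩ := h₁.exists_perm hz ht₁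
  obtain ⟨σ₂, hσ₂⟩ := h₂.exists_perm (hs ▸ hz) ht₂
  refine ⟨hs, fun a ha => funext fun i => PNat.coe_inj.1 ?_⟩
  rw [hz] at hw ha
  exact eqOn_Ici_of_eqOn_Ici_of_affine hw (f := fun a => χ₁ a i) (g := fun a => χ₂ a i)
    (fun a ha => hσ₁ a ha i) (fun a ha => hσ₂ a ha i)
    (fun b hb => congrArg (fun x => (x i : ℕ)) (heq hb)) ha

theorem finite_eqOnSource_classes_of_eqOn (w : Fin n → ℕ+) (φ : (Fin n → ℕ+) → Fin n → ℕ+) :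
    (Quotient.mk PartialEquiv.eqOnSourceSetoid ''
      {χ | IsIPF χ ∧ w ∈ χ.source ∧ EqOn χ φ (Ici w)}).Finite := by
  refine Set.Finite.of_finite_image
    (f := Quotient.lift PartialEquiv.source fun _ _ => PartialEquiv.EqOnSource.source_eq) ?_ ?_
  · refine ((finite_Iic w).image Ici).subset ?_
    rintro _ ⟨_, ⟨χ, ⟨hχ, hw, -⟩, rfl⟩, rfl⟩
    obtain ⟨z, hz⟩ := hχ.1
    rw [hz] at hw
    exact ⟨z, hw, hz.symm⟩
  · rintro _ ⟨χ₁, ⟨h₁, hw, he₁⟩, rfl⟩ _ ⟨χ₂, ⟨h₂, -, he₂⟩, rfl⟩ hs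
    exact Quotient.sound (h₁.eqOnSource_of_eqOn h₂ hs hw (he₁.trans he₂.symm))

theorem IsIPF.Ici_subset_image_Ici {α : PartialEquiv (Fin n → ℕ+) (Fin n → ℕ+)} (h : IsIPF α)
    {x : Fin n → ℕ+} (hx : x ∈ α.source) : Ici (α x) ⊆ α '' Ici x := by
  obtain ⟨y, hy⟩ := h.2.1
  intro a ha
  have hat : a ∈ α.target := by
    have hαx := α.map_source hx
    rw [hy] at hαx ⊢
    exact mem_Ici.2 (le_trans hαx ha)
  refine ⟨α.symm a, ?_, α.right_inv hat⟩
  rw [mem_Ici, h.2.2 x hx _ (α.map_target hat), α.right_inv hat]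
  exact ha

end IPF

/-- Elements of IPF(ℕ^n) are `EqOnSource`-classes of `PartialEquiv`s, and `α.trans χ` is the
product `αχ` in the right-action convention. -/
theorem stmt19 (n : ℕ) (α β : PartialEquiv (Fin n → ℕ+) (Fin n → ℕ+))
    (hα : IsIPF α) (hβ : IsIPF β) :
    Set.Finite (Quotient.mk (PartialEquiv.eqOnSourceSetoid) ''
      {χ | IsIPF χ ∧ α.trans χ ≈ β}) ∧
    Set.Finite (Quotient.mk (PartialEquiv.eqOnSourceSetoid) ''
      {χ | IsIPF χ ∧ χ.trans α ≈ β}) := by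
  obtain ⟨x, hx⟩ := hβ.1
  refine ⟨(finite_eqOnSource_classes_of_eqOn (α x) (β ∘ α.symm)).subset (image_mono ?_),
    (finite_eqOnSource_classes_of_eqOn x (α.symm ∘ β)).subset (image_mono ?_)⟩
  · rintro χ ⟨hχ, hαχ⟩
    obtain ⟨hβα, hsub, heq⟩ := PartialEquiv.eqOn_of_trans_eqOnSource_left hαχ
    have hxα : x ∈ α.source := hβα (hx ▸ self_mem_Ici)
    have hIci : Ici (α x) ⊆ α '' β.source := hx ▸ hα.Ici_subset_image_Ici hxα
    exact ⟨hχ, hsub (hIci self_mem_Ici), heq.mono hIci⟩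
  · rintro χ ⟨hχ, hχα⟩
    obtain ⟨hsub, heq⟩ := PartialEquiv.eqOn_of_trans_eqOnSource_right hχα
    rw [hx] at hsub heq
    exact ⟨hχ, hsub self_mem_Ici, heq⟩
end
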